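/- Correctness of the FFT-based subset convolution algorithm (abstract form): for f, g : 2^[n] → R, define h^{(k)} : 2^[n] → R by h^{(k)}(S) = Σ_{i=0}^{k} Σ_{a+b=enc(S)} F_i(a) G_{k−i}(b) where F_i, G_j are the sequence encodings of the chopped functions f^{(i)}, g^{(j)}. Then Σ_{k=0}^{n} [|S| = k] · h^{(k)}(S) = (f ∗ g)(S) for every S ⊆ [n]. -/

import Mathlib

def enc {n : ℕ} (T : Finset (Fin n)) : ℕ := ∑ t ∈ T, 2 ^ (t : ℕ)

def chop {R : Type*} [CommRing R] {n : ℕ}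
    (f : Finset (Fin n) → R) (i : ℕ) (T : Finset (Fin n)) : R :=
  if T.card = i then f T else 0

def seqEnc {R : Type*} [CommRing R] {n : ℕ}
    (f : Finset (Fin n) → R) (i : ℕ) (a : ℕ) : R :=
  ∑ T ∈ Finset.univ.filter (fun T : Finset (Fin n) => enc T = a), chop f i T

def subsetConv {R : Type*} [CommRing R] {n : ℕ}
    (f g : Finset (Fin n) → R) (S : Finset (Fin n)) : R :=
  ∑ T ∈ S.powerset, f T * g (S \ T)

/-!
The coefficient of `X ^ enc S` in the product of the generating series of `f^{(i)}` and
`g^{(k-i)}` collects all pairs `(T, U)` with `enc T + enc U = enc S` and `|T| = i`, `|U| = k - i`.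
Summing over `i` and keeping only `k = |S|` leaves the pairs with `|T| + |U| = |S|`. Since the
number of binary ones is subadditive and every carry loses at least one of them, such a pair
adds without carries: `T` and `U` are disjoint, and then `T ∪ U = S` because `enc` is injective.
So exactly the pairs `(T, S \ T)` with `T ⊆ S` survive, which is the subset convolution.
-/

open Finset

namespace Nat

theorem length_bitIndices_add_le (a b : ℕ) :
    (a + b).bitIndices.length ≤ a.bitIndices.length + b.bitIndices.length := by
  induction hs : a + b using Nat.strong_induction_on generalizing a b with
  | _ s ih =>
  subst hs
  rcases a.eq_zero_or_pos with rfl | ha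
  · simp
  rcases b.eq_zero_or_pos with rfl | hb
  · simp
  obtain ⟨a, rfl | rfl⟩ := a.even_or_odd' <;> obtain ⟨b, rfl | rfl⟩ := b.even_or_odd'
  · rw [show 2 * a + 2 * b = 2 * (a + b) by ring]
    have := ih (a + b) (by omega) a b rfl
    simp only [bitIndices_two_mul, List.length_map]
    omega
  · rw [show 2 * a + (2 * b + 1) = 2 * (a + b) + 1 by ring]
    have := ih (a + b) (by omega) a b rfl
    simp only [bitIndices_two_mul, bitIndices_two_mul_add_one, List.length_cons, List.length_map]
    omega
  · rw [show 2 * a + 1 + 2 * b = 2 * (a + b) + 1 by ring]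
    have := ih (a + b) (by omega) a b rfl
    simp only [bitIndices_two_mul, bitIndices_two_mul_add_one, List.length_cons, List.length_map]
    omega
  · rw [show 2 * a + 1 + (2 * b + 1) = 2 * (a + b + 1) by ring]
    have hcarry := ih (a + b + 1) (by omega) (a + b) 1 rfl
    have := ih (a + b) (by omega) a b rfl
    simp only [bitIndices_two_mul, bitIndices_two_mul_add_one, bitIndices_one, List.length_cons,
      List.length_map, List.length_nil] at hcarry ⊢
    omega

theorem length_bitIndices_sum_two_pow (s : Finset ℕ) :
    (∑ i ∈ s, 2 ^ i).bitIndices.length = s.card := by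
  rw [← List.toFinset_card_of_nodup bitIndices_nodup, toFinset_bitIndices_sum_two_pow]

theorem disjoint_of_card_add_card_le_length_bitIndices {s t : Finset ℕ}
    (h : s.card + t.card ≤ (∑ i ∈ s, 2 ^ i + ∑ i ∈ t, 2 ^ i).bitIndices.length) :
    Disjoint s t := by
  rw [Finset.disjoint_left]
  intro x hs ht
  -- a common element `x` contributes `2 ^ x + 2 ^ x = 2 ^ (x + 1)`: two bits become one
  have hsplit : ∑ i ∈ s, 2 ^ i + ∑ i ∈ t, 2 ^ i
      = (∑ i ∈ s.erase x, 2 ^ i + ∑ i ∈ t.erase x, 2 ^ i) + 2 ^ (x + 1) := by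
    rw [← add_sum_erase s _ hs, ← add_sum_erase t _ ht]; ring
  have hcarry := calc
    (∑ i ∈ s, 2 ^ i + ∑ i ∈ t, 2 ^ i).bitIndices.length
      ≤ (∑ i ∈ s.erase x, 2 ^ i + ∑ i ∈ t.erase x, 2 ^ i).bitIndices.length + 1 := by
        simpa [hsplit] using length_bitIndices_add_le _ (2 ^ (x + 1))
    _ ≤ (s.erase x).card + (t.erase x).card + 1 := by
        simpa only [length_bitIndices_sum_two_pow, add_le_add_iff_right]
          using length_bitIndices_add_le (∑ i ∈ s.erase x, 2 ^ i) (∑ i ∈ t.erase x, 2 ^ i)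
  rw [card_erase_of_mem hs, card_erase_of_mem ht] at hcarry
  have := s.card_pos.2 ⟨x, hs⟩
  have := t.card_pos.2 ⟨x, ht⟩
  omega

end Nat

namespace Finset

theorem sum_antidiagonal_mul_sum_fiber {α β M R : Type*} [Fintype α] [Fintype β]
    [AddMonoid M] [HasAntidiagonal M] [DecidableEq M] [CommSemiring R]
    (φ : α → M) (ψ : β → M) (u : α → R) (v : β → R) (m : M) :
    ∑ p ∈ antidiagonal m, (∑ x with φ x = p.1, u x) * (∑ y with ψ y = p.2, v y)
      = ∑ q : α × β with φ q.1 + ψ q.2 = m, u q.1 * v q.2 := by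
  symm
  rw [← sum_fiberwise_of_maps_to (g := fun q : α × β => (φ q.1, ψ q.2)) (t := antidiagonal m)
    (by simp)]
  refine sum_congr rfl fun p hp => ?_
  rw [sum_mul_sum, ← sum_product', filter_filter]
  congr 1
  ext q
  rw [HasAntidiagonal.mem_antidiagonal] at hp
  simp only [mem_filter, mem_univ, true_and, mem_product, Prod.ext_iff]
  constructor
  · exact And.right
  · rintro ⟨h1, h2⟩; exact ⟨h1 ▸ h2 ▸ hp, h1, h2⟩

theorem sum_filter_eq_sdiff_eq_sum_powerset {α M : Type*} [Fintype α] [DecidableEq α]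
    [AddCommMonoid M] (S : Finset α) (F : Finset α → Finset α → M) :
    ∑ q : Finset α × Finset α with q.1 ⊆ S ∧ q.2 = S \ q.1, F q.1 q.2
      = ∑ T ∈ S.powerset, F T (S \ T) := by
  have hpairs : ({q | q.1 ⊆ S ∧ q.2 = S \ q.1} : Finset (Finset α × Finset α))
      = S.powerset.map ⟨fun T => (T, S \ T), fun _ _ h => congrArg Prod.fst h⟩ := by
    ext ⟨T, U⟩
    simp only [mem_filter, mem_univ, true_and, mem_map, mem_powerset]
    constructor
    · rintro ⟨hT, rfl⟩
      exact ⟨T, hT, rfl⟩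
    · rintro ⟨T, hT, ⟨⟩⟩
      exact ⟨hT, rfl⟩
  rw [hpairs, sum_map]
  rfl

end Finset

section

variable {n : ℕ}

theorem enc_eq_sum_map (T : Finset (Fin n)) :
    enc T = ∑ i ∈ T.map Fin.valEmbedding, 2 ^ i :=
  (sum_map T Fin.valEmbedding _).symm

theorem enc_injective : Function.Injective (enc (n := n)) := fun T U h => by
  rw [enc_eq_sum_map, enc_eq_sum_map] at h
  exact map_injective _ (geomSum_injective le_rfl h)

theorem enc_add_enc_sdiff {T S : Finset (Fin n)} (h : T ⊆ S) : enc T + enc (S \ T) = enc S := by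
  rw [enc, enc, enc, add_comm, sum_sdiff h]

theorem enc_add_enc_eq_enc_and_card_add_card_eq_iff {T U S : Finset (Fin n)} :
    enc T + enc U = enc S ∧ T.card + U.card = S.card ↔ T ⊆ S ∧ U = S \ T := by
  constructor
  · rintro ⟨henc, hcard⟩
    have hdisj : Disjoint T U := by
      rw [← disjoint_map Fin.valEmbedding]
      apply Nat.disjoint_of_card_add_card_le_length_bitIndices
      rw [← enc_eq_sum_map, ← enc_eq_sum_map, henc, enc_eq_sum_map,
        Nat.length_bitIndices_sum_two_pow]
      simp [hcard]
    have hunion : T ∪ U = S := enc_injective (by rw [enc, sum_union hdisj]; exact henc)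
    subst hunion
    exact ⟨subset_union_left, (union_sdiff_cancel_left hdisj).symm⟩
  · rintro ⟨hsub, rfl⟩
    refine ⟨enc_add_enc_sdiff hsub, ?_⟩
    rw [card_sdiff_of_subset hsub]
    have := card_le_card hsub
    omega

theorem sum_range_chop_mul_chop {R : Type*} [CommRing R] (f g : Finset (Fin n) → R) (k : ℕ)
    (T U : Finset (Fin n)) :
    ∑ i ∈ range (k + 1), chop f i T * chop g (k - i) U
      = if T.card + U.card = k then f T * g U else 0 := by
  simp only [chop, ite_mul, zero_mul, sum_ite_eq, mem_range]
  split_ifs <;> first | rfl | omega | simp_all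

end

theorem fft_subset_conv_correct {R : Type*} [CommRing R] {n : ℕ}
    (f g : Finset (Fin n) → R) (S : Finset (Fin n)) :
    ∑ k ∈ Finset.range (n + 1),
      (if S.card = k then
        ∑ i ∈ Finset.range (k + 1),
          ∑ p ∈ Finset.HasAntidiagonal.antidiagonal (enc S), seqEnc f i p.1 * seqEnc g (k - i) p.2
      else 0)
      = subsetConv f g S := by
  have hS : S.card ∈ range (n + 1) := mem_range_succ_iff.2 (card_le_univ S |>.trans (by simp))
  rw [sum_ite_eq, if_pos hS]
  simp only [seqEnc, sum_antidiagonal_mul_sum_fiber]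
  rw [sum_comm]
  simp only [sum_range_chop_mul_chop]
  rw [← sum_filter, filter_filter]
  simp only [enc_add_enc_eq_enc_and_card_add_card_eq_iff]
  exact sum_filter_eq_sdiff_eq_sum_powerset S (fun T U => f T * g U)
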